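/- For γ ~ Gamma(N, b) with N a positive integer, the expectation E[Q(√γ)] equals (1/2)[1 − √(β/(1+β)) Σ_{n=0}^{N−1} C(2n,n) (1/(4(1+β)))^n], where β = 1/(2b). -/

import Mathlib

open MeasureTheory ProbabilityTheory

/-- The Gaussian tail function `Q(x) = (2π)^{-1/2} ∫_x^∞ e^{-t²/2} dt`. -/
noncomputable def gaussQ (x : ℝ) : ℝ :=
  (Real.sqrt (2 * Real.pi))⁻¹ * ∫ t in Set.Ioi x, Real.exp (-t ^ 2 / 2)

open Real Set
open scoped ENNReal NNReal


lemma gamma_nat_add_half (k : ℕ) :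
    Real.Gamma ((k : ℝ) + 1/2) = Real.sqrt π * (2*k).factorial / (4^k * k.factorial) := by
  induction k with
  | zero =>
      rw [show ((0:ℕ):ℝ) + 1/2 = 1/2 by norm_num, Real.Gamma_one_half_eq]
      simp
  | succ n ih =>
      have h : ((n+1 : ℕ) : ℝ) + 1/2 = ((n:ℝ) + 1/2) + 1 := by push_cast; ring
      rw [h, Real.Gamma_add_one (by positivity), ih]
      have h2 : ((2*(n+1)).factorial : ℝ) = (2*n+2) * ((2*n+1) * (2*n).factorial) := by
        rw [show 2*(n+1) = (2*n+1)+1 by ring, Nat.factorial_succ, Nat.factorial_succ]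
        push_cast; ring
      have h3 : ((n+1).factorial : ℝ) = (n+1) * n.factorial := by
        rw [Nat.factorial_succ]; push_cast; ring
      rw [h2, h3]
      have h4 : (n.factorial : ℝ) ≠ 0 := Nat.cast_ne_zero.mpr n.factorial_ne_zero
      field_simp
      ring

lemma moment_gauss (k : ℕ) {c : ℝ} (hc : 0 < c) :
    ∫ t in Ioi (0:ℝ), (t ^ (2*k) * Real.exp (-(c * t^2))) =
      (1/c) ^ ((k:ℝ) + 1/2) * Real.Gamma ((k:ℝ) + 1/2) / 2 := by
  have h := integral_rpow_mul_exp_neg_mul_rpow (p := 2) (q := (2*k : ℝ)) (b := c)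
    two_pos (by have := Nat.cast_nonneg (α := ℝ) k; linarith : (-1:ℝ) < 2*(k:ℝ)) hc
  have e1 : ∫ t in Ioi (0:ℝ), (t ^ (2*k) * Real.exp (-(c * t^2)))
      = ∫ x in Ioi (0:ℝ), x ^ ((2*k:ℕ):ℝ) * exp (- c * x ^ (2:ℝ)) := by
    refine setIntegral_congr_fun measurableSet_Ioi (fun x hx => ?_)
    rw [rpow_natCast, rpow_two, neg_mul]
  rw [e1]
  push_cast
  rw [h]
  rw [show (-(2*(k:ℝ) + 1) / 2) = -((k:ℝ) + 1/2) by ring,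
    show ((2*(k:ℝ) + 1) / 2) = ((k:ℝ) + 1/2) by ring,
    Real.rpow_neg hc.le, ← Real.inv_rpow hc.le, one_div]
  ring


lemma sum_deriv_telescope (m : ℕ) (b t : ℝ) :
    b * ∑ k ∈ Finset.range (m+1), b^k * t^k / k.factorial
      - ∑ k ∈ Finset.range (m+1), b^k / k.factorial * (k * t^(k-1))
    = b^(m+1) * t^m / m.factorial := by
  rw [Finset.mul_sum, Finset.sum_range_succ, Finset.sum_range_succ']
  have he : ∀ k ∈ Finset.range m, b^(k+1) / ((k+1).factorial : ℝ) * (((k+1 : ℕ) : ℝ) * t^(k+1-1))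
      = b * (b^k * t^k / k.factorial) := by
    intro k _
    rw [Nat.add_sub_cancel, Nat.factorial_succ]
    have h2 : (k.factorial : ℝ) ≠ 0 := by positivity
    push_cast
    field_simp
    ring
  rw [Finset.sum_congr rfl he]
  simp
  ring

lemma hasDerivAt_H (m : ℕ) (b t : ℝ) :
    HasDerivAt (fun y => -(Real.exp (-(b*y)) * ∑ k ∈ Finset.range (m+1), b^k * y^k / k.factorial))
      (Real.exp (-(b*t)) * (b^(m+1) * t^m / m.factorial)) t := by
  have hexp : HasDerivAt (fun y : ℝ => Real.exp (-(b*y))) (Real.exp (-(b*t)) * (-b)) t := by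
    have : HasDerivAt (fun y : ℝ => -(b*y)) (-b) t := by
      simpa using ((hasDerivAt_id t).const_mul b).fun_neg
    exact this.exp
  have hsum : HasDerivAt (fun y : ℝ => ∑ k ∈ Finset.range (m+1), b^k * y^k / k.factorial)
      (∑ k ∈ Finset.range (m+1), b^k / k.factorial * (k * t^(k-1))) t := by
    refine HasDerivAt.fun_sum (fun k _ => ?_)
    have h := (hasDerivAt_pow k t).const_mul (b^k / (k.factorial : ℝ))
    have hfe : (fun y : ℝ => b^k * y^k / k.factorial) = fun y : ℝ => b^k / (k.factorial : ℝ) * y^k := by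
      funext y; ring
    rw [hfe]
    exact h
  have := (hexp.fun_mul hsum).fun_neg
  refine this.congr_deriv ?_
  rw [← sum_deriv_telescope m b t]
  ring

lemma gamma_cdf (m : ℕ) {b : ℝ} (hb : 0 < b) {y : ℝ} (hy : 0 ≤ y) :
    ∫ x in Ioo 0 y, gammaPDFReal (m+1 : ℕ) b x
      = 1 - Real.exp (-(b*y)) * ∑ k ∈ Finset.range (m+1), (b*y)^k / k.factorial := by
  set f : ℝ → ℝ := fun x => Real.exp (-(b*x)) * (b^(m+1) * x^m / m.factorial) with hf
  have hcong : ∀ x ∈ Ioo 0 y, gammaPDFReal (m+1 : ℕ) b x = f x := by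
    intro x hx
    rw [gammaPDFReal, if_pos hx.1.le, hf]
    have h1 : ((m+1:ℕ):ℝ) - 1 = ((m:ℕ):ℝ) := by push_cast; ring
    rw [h1, rpow_natCast, rpow_natCast, show ((m+1:ℕ):ℝ) = (m:ℝ)+1 by push_cast; ring,
      Real.Gamma_nat_eq_factorial]
    ring
  rw [setIntegral_congr_fun measurableSet_Ioo hcong,
    ← integral_Ioc_eq_integral_Ioo, ← intervalIntegral.integral_of_le hy]
  have hderiv : ∀ x ∈ uIcc (0:ℝ) y,
      HasDerivAt (fun z => -(Real.exp (-(b*z)) * ∑ k ∈ Finset.range (m+1), b^k * z^k / k.factorial))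
        (f x) x := fun x _ => hasDerivAt_H m b x
  have hcont : Continuous f := by fun_prop
  rw [intervalIntegral.integral_eq_sub_of_hasDerivAt hderiv (hcont.intervalIntegrable 0 y)]
  have h0 : ∑ k ∈ Finset.range (m+1), b^k * (0:ℝ)^k / k.factorial = 1 := by
    rw [Finset.sum_range_succ']
    simp
  simp only [mul_zero, neg_zero, Real.exp_zero, h0, one_mul]
  have : ∀ k, (b*y)^k = b^k * y^k := fun k => mul_pow b y k
  simp_rw [this]
  ring

lemma term_eq (k : ℕ) {b : ℝ} (hb : 0 < b) :
    (Real.sqrt (2*π))⁻¹ *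
      (b^k / k.factorial * ((1/(b+1/2)) ^ ((k:ℝ) + 1/2) * Real.Gamma ((k:ℝ) + 1/2) / 2))
    = (1/2) * (Real.sqrt ((1/(2*b)) / (1 + 1/(2*b))) *
        ((Nat.choose (2*k) k : ℝ) * (1/(4*(1+1/(2*b))))^k)) := by
  have hc : (0:ℝ) < b + 1/2 := by linarith
  have hic : (0:ℝ) < 1/(b+1/2) := by positivity
  have hrp : (1/(b+1/2)) ^ ((k:ℝ) + 1/2)
      = (1/(b+1/2))^k * Real.sqrt (1/(b+1/2)) := by
    rw [Real.rpow_add hic, Real.rpow_natCast, Real.sqrt_eq_rpow]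
  have hchoose : ((Nat.choose (2*k) k : ℕ) : ℝ) * k.factorial * k.factorial
      = (2*k).factorial := by
    have := Nat.choose_mul_factorial_mul_factorial (Nat.le_mul_of_pos_left k two_pos)
    rw [show 2*k - k = k by omega] at this
    exact_mod_cast congrArg (Nat.cast (R := ℝ)) this
  have hsq1 : Real.sqrt ((1/(2*b)) / (1 + 1/(2*b))) = Real.sqrt (1/(2*b+1)) := by
    congr 1; field_simp
  have hsq2 : (Real.sqrt (2*π))⁻¹ * Real.sqrt π * Real.sqrt (1/(b+1/2))
      = Real.sqrt (1/(2*b+1)) := by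
    rw [← Real.sqrt_inv, ← Real.sqrt_mul (by positivity), ← Real.sqrt_mul (by positivity)]
    congr 1
    have hπ : (0:ℝ) < π := pi_pos
    field_simp
  have hpow : (1/(4*(1+1/(2*b))))^k = (b * (1/(b+1/2)) / 4)^k := by
    congr 1; field_simp
  rw [gamma_nat_add_half, hrp, hsq1, hpow]
  have hkf : (k.factorial : ℝ) ≠ 0 := by positivity
  have h4 : ((4:ℝ)^k) ≠ 0 := by positivity
  rw [← hchoose, ← hsq2]
  field_simp
  rw [div_pow, div_pow, mul_pow, mul_pow]
  field_simp

lemma integrable_gammaPDFReal {a r : ℝ} (ha : 0 < a) (hr : 0 < r) :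
    Integrable (gammaPDFReal a r) := by
  refine ⟨(measurable_gammaPDFReal a r).aestronglyMeasurable, ?_⟩
  rw [hasFiniteIntegral_iff_ofReal (ae_of_all _ (gammaPDFReal_nonneg ha hr))]
  have : ∫⁻ x, ENNReal.ofReal (gammaPDFReal a r x) = 1 := lintegral_gammaPDF_eq_one ha hr
  rw [this]; exact ENNReal.one_lt_top

lemma integrable_phi : Integrable (fun t : ℝ => Real.exp (-t^2/2)) := by
  have hfe : (fun t : ℝ => Real.exp (-t^2/2)) = fun t : ℝ => Real.exp (-(1/2 : ℝ) * t^2) := by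
    funext t; congr 1; ring
  rw [hfe]
  exact integrable_exp_neg_mul_sq (by norm_num : (0:ℝ) < 1/2)

/-- For `γ ~ Gamma(N, b)` with integer shape `N ≥ 1` and rate `b > 0`,
`E[Q(√γ)] = (1/2)[1 − √(β/(1+β)) Σ_{n=0}^{N−1} C(2n,n) (1/(4(1+β)))^n]` with `β = 1/(2b)`. -/
theorem integral_gaussQ_sqrt_gammaMeasure (N : ℕ) (hN : 0 < N) (b : ℝ) (hb : 0 < b) :
    ∫ x, gaussQ (Real.sqrt x) ∂(gammaMeasure N b) =
      (1 / 2) * (1 - Real.sqrt ((1 / (2 * b)) / (1 + 1 / (2 * b))) *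
        ∑ n ∈ Finset.range N,
          (Nat.choose (2 * n) n : ℝ) * (1 / (4 * (1 + 1 / (2 * b)))) ^ n) := by
  obtain ⟨m, rfl⟩ : ∃ m, N = m + 1 := ⟨N - 1, (Nat.succ_pred_eq_of_pos hN).symm⟩
  have hapos : (0:ℝ) < ((m+1 : ℕ) : ℝ) := by positivity
  set g : ℝ → ℝ := gammaPDFReal ((m+1 : ℕ) : ℝ) b with hgdef
  have hgnn : ∀ x, 0 ≤ g x := gammaPDFReal_nonneg hapos hb
  have hgmeas : Measurable g := measurable_gammaPDFReal _ _
  set c : ℝ := b + 1/2 with hcdef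
  have hc : 0 < c := by positivity
  set K : ℝ := (Real.sqrt (2*π))⁻¹ with hKdef
  -- Step A: withDensity
  have hA : ∫ x, gaussQ (Real.sqrt x) ∂(gammaMeasure ((m+1 : ℕ) : ℝ) b)
      = ∫ x, g x * gaussQ (Real.sqrt x) := by
    rw [gammaMeasure]
    have hpdf : gammaPDF ((m+1 : ℕ) : ℝ) b
        = fun x => ((Real.toNNReal (g x) : ℝ≥0) : ℝ≥0∞) := rfl
    rw [hpdf, integral_withDensity_eq_integral_smul hgmeas.real_toNNReal]
    congr 1; funext x
    rw [NNReal.smul_def, smul_eq_mul, Real.coe_toNNReal _ (hgnn x)]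
  -- Step B: restrict to Ioi 0
  have hB : ∫ x, g x * gaussQ (Real.sqrt x)
      = ∫ x in Ioi (0:ℝ), g x * gaussQ (Real.sqrt x) := by
    rw [← integral_Ici_eq_integral_Ioi, ← integral_indicator measurableSet_Ici]
    congr 1; funext x
    rcases le_or_gt 0 x with h | h
    · rw [indicator_of_mem (mem_Ici.mpr h)]
    · rw [indicator_of_notMem (by simpa using not_le.mpr h)]
      have : g x = 0 := by rw [hgdef, gammaPDFReal, if_neg (not_le.mpr h)]
      rw [this, zero_mul]
  -- Step C: gaussQ as indicator integral
  have hC : ∀ x : ℝ, 0 ≤ x → gaussQ (Real.sqrt x)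
      = K * ∫ t in Ioi (0:ℝ), (if x < t^2 then Real.exp (-t^2/2) else 0) := by
    intro x hx
    rw [gaussQ]
    congr 1
    rw [← integral_indicator measurableSet_Ioi, ← integral_indicator measurableSet_Ioi]
    congr 1; funext t
    rcases le_or_gt t 0 with ht | ht
    · rw [indicator_of_notMem (by simpa using ht.trans (Real.sqrt_nonneg x)),
        indicator_of_notMem (by simpa using ht)]
    · rw [indicator_of_mem (mem_Ioi.mpr ht)]
      by_cases hlt : x < t^2
      · rw [if_pos hlt, indicator_of_mem (mem_Ioi.mpr ((Real.sqrt_lt' ht).mpr hlt))]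
      · rw [if_neg hlt, indicator_of_notMem
          (by simp only [mem_Ioi]; exact fun h => hlt ((Real.sqrt_lt' ht).mp h))]
  -- Step D: combine
  have hD : ∫ x in Ioi (0:ℝ), g x * gaussQ (Real.sqrt x)
      = K * ∫ x in Ioi (0:ℝ), ∫ t in Ioi (0:ℝ),
          g x * (if x < t^2 then Real.exp (-t^2/2) else 0) := by
    rw [← integral_const_mul]
    refine setIntegral_congr_fun measurableSet_Ioi fun x hx => ?_
    rw [hC x hx.le, integral_const_mul]
    ring
  -- Integrability for Fubini
  have hFmeas : Measurable (fun p : ℝ × ℝ =>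
      g p.1 * (if p.1 < p.2^2 then Real.exp (-p.2^2/2) else 0)) := by
    apply (hgmeas.comp measurable_fst).mul
    exact Measurable.ite (measurableSet_lt measurable_fst (measurable_snd.pow_const 2))
      (((measurable_snd.pow_const 2).neg.div_const 2).exp) measurable_const
  have hgi : Integrable g (volume.restrict (Ioi 0)) :=
    (integrable_gammaPDFReal hapos hb).restrict
  have hphii : Integrable (fun t : ℝ => Real.exp (-t^2/2)) (volume.restrict (Ioi 0)) :=
    integrable_phi.restrict
  have hFint : Integrable (fun p : ℝ × ℝ =>
        g p.1 * (if p.1 < p.2^2 then Real.exp (-p.2^2/2) else 0))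
      ((volume.restrict (Ioi (0:ℝ))).prod (volume.restrict (Ioi (0:ℝ)))) := by
    refine (hgi.mul_prod hphii).mono' hFmeas.aestronglyMeasurable (ae_of_all _ fun p => ?_)
    rw [norm_mul, Real.norm_eq_abs, abs_of_nonneg (hgnn _)]
    refine mul_le_mul_of_nonneg_left ?_ (hgnn _)
    rw [Real.norm_eq_abs]
    split_ifs
    · rw [abs_of_nonneg (Real.exp_nonneg _)]
    · simpa using (Real.exp_nonneg _)
  -- Step E: Fubini swap
  have hE : (∫ x in Ioi (0:ℝ), ∫ t in Ioi (0:ℝ),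
        g x * (if x < t^2 then Real.exp (-t^2/2) else 0))
      = ∫ t in Ioi (0:ℝ), ∫ x in Ioi (0:ℝ),
        g x * (if x < t^2 then Real.exp (-t^2/2) else 0) :=
    integral_integral_swap
      (f := fun x t => g x * (if x < t^2 then Real.exp (-t^2/2) else 0)) hFint
  -- Step F: inner evaluation
  have hF : ∀ t ∈ Ioi (0:ℝ), (∫ x in Ioi (0:ℝ),
        g x * (if x < t^2 then Real.exp (-t^2/2) else 0))
      = (1 - Real.exp (-(b*t^2)) * ∑ k ∈ Finset.range (m+1), (b*t^2)^k / k.factorial)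
          * Real.exp (-t^2/2) := by
    intro t ht
    have hind : (fun x => g x * (if x < t^2 then Real.exp (-t^2/2) else 0))
        = (Iio (t^2)).indicator (fun x => g x * Real.exp (-t^2/2)) := by
      funext x
      by_cases h : x < t^2
      · rw [if_pos h, indicator_of_mem (mem_Iio.mpr h)]
      · rw [if_neg h, mul_zero, indicator_of_notMem (by simpa using h)]
    rw [hind, integral_indicator measurableSet_Iio,
      Measure.restrict_restrict measurableSet_Iio,
      show Iio (t^2) ∩ Ioi 0 = Ioo 0 (t^2) from by rw [inter_comm, Ioi_inter_Iio],
      integral_mul_const, hgdef, gamma_cdf m hb (sq_nonneg t)]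
  -- pointwise rewriting of outer integrand
  have hpt : ∀ t : ℝ, (1 - Real.exp (-(b*t^2)) *
        ∑ k ∈ Finset.range (m+1), (b*t^2)^k / k.factorial) * Real.exp (-t^2/2)
      = Real.exp (-(1/2:ℝ) * t^2) - ∑ k ∈ Finset.range (m+1),
          b^k / k.factorial * (t^(2*k) * Real.exp (-(c * t^2))) := by
    intro t
    have hep : ∀ k : ℕ, Real.exp (-(b*t^2)) * ((b*t^2)^k / k.factorial) * Real.exp (-t^2/2)
        = b^k / k.factorial * (t^(2*k) * Real.exp (-(c*t^2))) := by
      intro k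
      have h1 : (b*t^2)^k = b^k * t^(2*k) := by rw [mul_pow, pow_mul]
      have h2 : Real.exp (-(b*t^2)) * Real.exp (-t^2/2) = Real.exp (-(c*t^2)) := by
        rw [← Real.exp_add]; congr 1; rw [hcdef]; ring
      rw [h1, ← h2]; ring
    rw [sub_mul, one_mul]
    congr 1
    · congr 1; ring
    · rw [Finset.mul_sum, Finset.sum_mul]
      exact Finset.sum_congr rfl fun k _ => hep k
  -- integrability of moment integrands
  have hJint : ∀ k : ℕ, IntegrableOn (fun t : ℝ => t^(2*k) * Real.exp (-(c*t^2))) (Ioi 0) := by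
    intro k
    have h := integrableOn_rpow_mul_exp_neg_mul_sq hc
      (s := ((2*k : ℕ) : ℝ)) (by have := Nat.cast_nonneg (α := ℝ) (2*k); linarith)
    refine h.congr_fun (fun x hx => ?_) measurableSet_Ioi
    dsimp only
    rw [Real.rpow_natCast, neg_mul]
  have hsum_int : Integrable (fun t : ℝ => ∑ k ∈ Finset.range (m+1),
      b^k / k.factorial * (t^(2*k) * Real.exp (-(c*t^2)))) (volume.restrict (Ioi 0)) :=
    integrable_finset_sum _ (fun k _ => ((hJint k).const_mul _))
  have hphi2 : IntegrableOn (fun t : ℝ => Real.exp (-(1/2:ℝ) * t^2)) (Ioi 0) :=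
    (integrable_exp_neg_mul_sq (by norm_num : (0:ℝ) < 1/2)).integrableOn
  -- assemble
  rw [hA, hB, hD, hE, setIntegral_congr_fun measurableSet_Ioi hF]
  rw [show (fun t : ℝ => (1 - Real.exp (-(b*t^2)) *
        ∑ k ∈ Finset.range (m+1), (b*t^2)^k / k.factorial) * Real.exp (-t^2/2))
      = fun t : ℝ => Real.exp (-(1/2:ℝ) * t^2) - ∑ k ∈ Finset.range (m+1),
          b^k / k.factorial * (t^(2*k) * Real.exp (-(c * t^2))) from funext hpt]
  rw [integral_sub hphi2 hsum_int, integral_gaussian_Ioi,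
    integral_finset_sum _ (fun k _ => ((hJint k).const_mul _))]
  have hmom : ∀ k ∈ Finset.range (m+1),
      (∫ t in Ioi (0:ℝ), b^k / k.factorial * (t^(2*k) * Real.exp (-(c*t^2))))
      = b^k / k.factorial * ((1/c) ^ ((k:ℝ) + 1/2) * Real.Gamma ((k:ℝ) + 1/2) / 2) := by
    intro k _
    rw [integral_const_mul, moment_gauss k hc]
  rw [Finset.sum_congr rfl hmom]
  have hK1 : K * (Real.sqrt (π / (1/2)) / 2) = 1/2 := by
    rw [hKdef, show π / (1/2 : ℝ) = 2*π by ring]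
    have h2π : Real.sqrt (2*π) ≠ 0 := by
      refine ne_of_gt (Real.sqrt_pos.mpr ?_); positivity
    field_simp
  have hterm : ∀ k ∈ Finset.range (m+1),
      K * (b^k / k.factorial * ((1/c) ^ ((k:ℝ) + 1/2) * Real.Gamma ((k:ℝ) + 1/2) / 2))
      = (1/2) * (Real.sqrt ((1/(2*b)) / (1 + 1/(2*b))) *
        ((Nat.choose (2*k) k : ℝ) * (1/(4*(1+1/(2*b))))^k)) := fun k _ => term_eq k hb
  rw [mul_sub, hK1, Finset.mul_sum, Finset.sum_congr rfl hterm, ← Finset.mul_sum,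
    ← Finset.mul_sum]
  ring
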